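/- In the torus J = C³/Λ, the fixed locus of the antireflection ρ₂ : (z₁,z₂,z₃) ↦ (−z₁,−z₂,z₃) is the union of exactly 4 translates of the elliptic curve E = (V₁ + Λ)/Λ, where V₁ is the z₃-axis; representatives of the 4 translates are 0, (1,0,0), (α/2, α/2, 0), and (1+α/2, α/2, 0). -/

import Mathlib

/-!
In ℤ[α]-coordinates `(P, Q, S)`, with `ℤ[α] = ℤ ⊕ ℤα`, `α² = α - 2` and `ᾱ = 1 - α`, the lattice is
`Λ = {Q - P ∈ αℤ[α], S - Q + αP ∈ 2ℤ[α]}`, and `x ∈ αℤ[α]` just says that the ℤ-part of `x` is even.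
Since `ρ₂ z - z = (-2z₀, -2z₁, 0)`, the point `z` is fixed modulo `Λ` iff `z₀, z₁ ∈ ℤ[α] + (e/2)α`
for one common `e ∈ ℤ`. Modulo `Λ + V₁` only `(z₀, z₁)` modulo `{(P, Q) : Q - P ∈ αℤ[α]}`
matters, and such a fixed point is determined by the parities of `e` and of the ℤ-part of
`z₀ - z₁`: four classes, represented by the `κᵢ`.
-/

noncomputable section

def Kalpha : ℂ := (1 + Complex.I * Real.sqrt 7) / 2
def Kalphabar : ℂ := (1 - Complex.I * Real.sqrt 7) / 2

def Ke1 : Fin 3 → ℂ := ![0, Kalpha, Kalpha]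
def Ke2 : Fin 3 → ℂ := ![0, 0, 2]
def Ke3 : Fin 3 → ℂ := ![1, 1, Kalphabar]

def LambdaZ : Submodule ℤ (Fin 3 → ℂ) :=
  Submodule.span ℤ {Ke1, Ke2, Ke3, Kalpha • Ke1, Kalpha • Ke2, Kalpha • Ke3}

/-- The four representatives `0, (1,0,0), (α/2,α/2,0), (1+α/2,α/2,0)`. -/
def kappas : Fin 4 → (Fin 3 → ℂ) :=
  ![![0,0,0], ![1,0,0], ![Kalpha/2, Kalpha/2, 0], ![1 + Kalpha/2, Kalpha/2, 0]]

lemma Kalpha_mul_self : Kalpha * Kalpha = Kalpha - 2 := by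
  have h7 : (Real.sqrt 7 : ℂ) * Real.sqrt 7 = 7 := by
    exact_mod_cast Real.mul_self_sqrt (by norm_num : (0 : ℝ) ≤ 7)
  unfold Kalpha
  linear_combination (Complex.I ^ 2 / 4) * h7 + (7 / 4 : ℂ) * Complex.I_sq

lemma Kalphabar_eq : Kalphabar = 1 - Kalpha := by
  unfold Kalpha Kalphabar
  ring

lemma eq_zero_of_intCast_add_intCast_mul_Kalpha_eq_zero {m n : ℤ}
    (h : (m : ℂ) + n * Kalpha = 0) : m = 0 ∧ n = 0 := by
  have hn : n = 0 := by
    simpa [Kalpha, Complex.mul_im] using congrArg Complex.im h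
  subst hn
  exact ⟨by simpa using h, rfl⟩

lemma mem_LambdaZ_iff {x : Fin 3 → ℂ} :
    x ∈ LambdaZ ↔ ∃ p₀ p₁ q₀ q₁ s₀ s₁ : ℤ,
      x = ![p₀ + p₁ * Kalpha, q₀ + q₁ * Kalpha, s₀ + s₁ * Kalpha] ∧
      2 ∣ q₀ - p₀ ∧ 2 ∣ s₀ - q₀ ∧ 2 ∣ s₁ - q₁ + p₀ + p₁ := by
  constructor
  · intro hx
    induction hx using Submodule.span_induction with
    | mem x hx =>
      rcases hx with rfl | rfl | rfl | rfl | rfl | rfl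
      · exact ⟨0, 0, 0, 1, 0, 1, by ext j; fin_cases j <;> simp [Ke1], by decide⟩
      · exact ⟨0, 0, 0, 0, 2, 0, by ext j; fin_cases j <;> simp [Ke2], by decide⟩
      · refine ⟨1, 0, 1, 0, 1, -1, ?_, by decide⟩
        ext j; fin_cases j <;> simp [Ke3, Kalphabar_eq]; ring
      · refine ⟨0, 0, -2, 1, -2, 1, ?_, by decide⟩
        ext j; fin_cases j <;> simp [Ke1, Kalpha_mul_self] <;> ring
      · exact ⟨0, 0, 0, 0, 0, 2, by ext j; fin_cases j <;> simp [Ke2]; ring, by decide⟩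
      · refine ⟨0, 1, 0, 1, 2, 0, ?_, by decide⟩
        ext j; fin_cases j <;> simp [Ke3, Kalphabar_eq]; linear_combination -Kalpha_mul_self
    | zero => exact ⟨0, 0, 0, 0, 0, 0, by ext j; fin_cases j <;> simp, by decide⟩
    | add x y _ _ hx hy =>
      obtain ⟨p₀, p₁, q₀, q₁, s₀, s₁, rfl, h₁, h₂, h₃⟩ := hx
      obtain ⟨p₀', p₁', q₀', q₁', s₀', s₁', rfl, h₁', h₂', h₃'⟩ := hy
      refine ⟨p₀ + p₀', p₁ + p₁', q₀ + q₀', q₁ + q₁', s₀ + s₀', s₁ + s₁', ?_,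
        by omega, by omega, by omega⟩
      ext j; fin_cases j <;> simp <;> ring
    | smul a x _ hx =>
      obtain ⟨p₀, p₁, q₀, q₁, s₀, s₁, rfl, h₁, h₂, h₃⟩ := hx
      refine ⟨a * p₀, a * p₁, a * q₀, a * q₁, a * s₀, a * s₁, ?_, ?_, ?_, ?_⟩
      · ext j; fin_cases j <;> simp <;> ring
      · simpa only [mul_sub] using dvd_mul_of_dvd_right h₁ a
      · simpa only [mul_sub] using dvd_mul_of_dvd_right h₂ a
      · simpa only [mul_add, mul_sub] using dvd_mul_of_dvd_right h₃ a
  · rintro ⟨p₀, p₁, q₀, q₁, s₀, s₁, rfl, h₁, h₂, h₃⟩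
    obtain ⟨k₁, rfl⟩ : ∃ k, q₀ = p₀ + 2 * k := ⟨(q₀ - p₀) / 2, by omega⟩
    obtain ⟨k₂, rfl⟩ : ∃ k, s₀ = p₀ + 2 * k₁ + 2 * k := ⟨(s₀ - p₀ - 2 * k₁) / 2, by omega⟩
    obtain ⟨k₃, rfl⟩ : ∃ k, s₁ = q₁ - p₀ - p₁ + 2 * k := ⟨(s₁ - q₁ + p₀ + p₁) / 2, by omega⟩
    have hx : ![p₀ + p₁ * Kalpha, p₀ + 2 * k₁ + q₁ * Kalpha,
        p₀ + 2 * k₁ + 2 * k₂ + (q₁ - p₀ - p₁ + 2 * k₃) * Kalpha] =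
        (q₁ - p₁ + k₁) • Ke1 + (-k₁) • (Kalpha • Ke1) + (k₂ - p₁) • Ke2 + k₃ • (Kalpha • Ke2) +
          p₀ • Ke3 + p₁ • (Kalpha • Ke3) := by
      ext j; fin_cases j <;> simp [Ke1, Ke2, Ke3, Kalphabar_eq]
      · linear_combination (k₁ : ℂ) * Kalpha_mul_self
      · linear_combination ((k₁ : ℂ) + p₁) * Kalpha_mul_self
    push_cast
    rw [hx]
    have smul_generator_mem :
        ∀ v ∈ ({Ke1, Ke2, Ke3, Kalpha • Ke1, Kalpha • Ke2, Kalpha • Ke3} : Set _), ∀ n : ℤ,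
          n • v ∈ LambdaZ := fun v hv n => LambdaZ.smul_mem n (Submodule.subset_span hv)
    refine add_mem (add_mem (add_mem (add_mem (add_mem ?_ ?_) ?_) ?_) ?_) ?_ <;>
      exact smul_generator_mem _ (by simp) _

def rho2 (z : Fin 3 → ℂ) : Fin 3 → ℂ := ![-z 0, -z 1, z 2]

lemma rho2_sub_self_mem_LambdaZ_iff {z : Fin 3 → ℂ} :
    rho2 z - z ∈ LambdaZ ↔ ∃ m₀ m₁ n₀ n₁ e : ℤ,
      z 0 = m₀ + (m₁ + e / 2) * Kalpha ∧ z 1 = n₀ + (n₁ + e / 2) * Kalpha := by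
  have hρ : rho2 z - z = ![-2 * z 0, -2 * z 1, 0] := by
    ext j; fin_cases j <;> simp [rho2] <;> ring
  rw [hρ, mem_LambdaZ_iff]
  constructor
  · rintro ⟨p₀, p₁, q₀, q₁, s₀, s₁, hx, h₁, h₂, h₃⟩
    have h0 := congrFun hx 0
    have h1 := congrFun hx 1
    have h2 := congrFun hx 2
    simp only [Matrix.cons_val] at h0 h1 h2
    obtain ⟨rfl, rfl⟩ := eq_zero_of_intCast_add_intCast_mul_Kalpha_eq_zero h2.symm
    obtain ⟨m₀, rfl⟩ : ∃ m, p₀ = -2 * m := ⟨-(p₀ / 2), by omega⟩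
    obtain ⟨n₀, rfl⟩ : ∃ n, q₀ = -2 * n := ⟨-(q₀ / 2), by omega⟩
    obtain ⟨n₁, rfl⟩ : ∃ n, q₁ = p₁ - 2 * n := ⟨(p₁ - q₁) / 2, by omega⟩
    refine ⟨m₀, 0, n₀, n₁, -p₁, ?_, ?_⟩
    · push_cast at h0 ⊢
      linear_combination -h0 / 2
    · push_cast at h1 ⊢
      linear_combination -h1 / 2
  · rintro ⟨m₀, m₁, n₀, n₁, e, h0, h1⟩
    refine ⟨-2 * m₀, -2 * m₁ - e, -2 * n₀, -2 * n₁ - e, 0, 0, ?_, by omega, by omega, by omega⟩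
    ext j; fin_cases j <;> simp [h0, h1] <;> ring

lemma exists_sub_add_smul_mem_LambdaZ_iff {z κ : Fin 3 → ℂ} :
    (∃ w : ℂ, z - (κ + w • ![0, 0, 1]) ∈ LambdaZ) ↔ ∃ p₀ p₁ q₀ q₁ : ℤ,
      z 0 - κ 0 = p₀ + p₁ * Kalpha ∧ z 1 - κ 1 = q₀ + q₁ * Kalpha ∧ 2 ∣ q₀ - p₀ := by
  simp_rw [mem_LambdaZ_iff]
  constructor
  · rintro ⟨w, p₀, p₁, q₀, q₁, s₀, s₁, hx, h, -, -⟩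
    have h0 := congrFun hx 0
    have h1 := congrFun hx 1
    simp only [Matrix.cons_val, Pi.sub_apply, Pi.add_apply, Pi.smul_apply, smul_eq_mul,
      mul_zero, add_zero] at h0 h1
    exact ⟨p₀, p₁, q₀, q₁, h0, h1, h⟩
  · rintro ⟨p₀, p₁, q₀, q₁, h0, h1, h⟩
    refine ⟨z 2 - κ 2 - (q₀ + (q₁ - p₀ - p₁) * Kalpha), p₀, p₁, q₀, q₁, q₀, q₁ - p₀ - p₁, ?_, h,
      ⟨0, by ring⟩, ⟨0, by ring⟩⟩
    ext j; fin_cases j <;> simp [Matrix.vecHead, Matrix.vecTail]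
    · linear_combination h0
    · linear_combination h1
    · ring

def kappaShift : Fin 4 → ℤ := ![0, 1, 0, 1]
def kappaHalf : Fin 4 → ℤ := ![0, 0, 1, 1]

lemma kappas_eq (i : Fin 4) :
    kappas i = ![kappaShift i + kappaHalf i / 2 * Kalpha, kappaHalf i / 2 * Kalpha, 0] := by
  fin_cases i <;> ext j <;> fin_cases j <;> simp [kappas, kappaShift, kappaHalf] <;> ring

lemma exists_sub_kappas_add_smul_mem_LambdaZ_iff {z : Fin 3 → ℂ} {m₀ m₁ n₀ n₁ e : ℤ}
    (hz₀ : z 0 = m₀ + (m₁ + e / 2) * Kalpha) (hz₁ : z 1 = n₀ + (n₁ + e / 2) * Kalpha)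
    (i : Fin 4) :
    (∃ w : ℂ, z - (kappas i + w • ![0, 0, 1]) ∈ LambdaZ) ↔
      2 ∣ e - kappaHalf i ∧ 2 ∣ m₀ - n₀ - kappaShift i := by
  rw [exists_sub_add_smul_mem_LambdaZ_iff, kappas_eq]
  simp only [Matrix.cons_val, hz₀, hz₁]
  constructor
  · rintro ⟨p₀, p₁, q₀, q₁, h0, h1, h⟩
    obtain ⟨hp₀, hp₁⟩ := eq_zero_of_intCast_add_intCast_mul_Kalpha_eq_zero
      (m := 2 * (m₀ - kappaShift i - p₀)) (n := 2 * (m₁ - p₁) + e - kappaHalf i)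
      (by push_cast; linear_combination 2 * h0)
    obtain ⟨hq₀, hq₁⟩ := eq_zero_of_intCast_add_intCast_mul_Kalpha_eq_zero
      (m := 2 * (n₀ - q₀)) (n := 2 * (n₁ - q₁) + e - kappaHalf i)
      (by push_cast; linear_combination 2 * h1)
    omega
  · rintro ⟨⟨k, hk⟩, h⟩
    have hk' : (e : ℂ) = kappaHalf i + 2 * k := by
      exact_mod_cast (by omega : e = kappaHalf i + 2 * k)
    refine ⟨m₀ - kappaShift i, m₁ + k, n₀, n₁ + k, ?_, ?_, by omega⟩
    · push_cast
      linear_combination Kalpha / 2 * hk'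
    · push_cast
      linear_combination Kalpha / 2 * hk'

lemma exists_two_dvd_sub_kappaHalf_and_sub_kappaShift (e d : ℤ) :
    ∃ i : Fin 4, 2 ∣ e - kappaHalf i ∧ 2 ∣ d - kappaShift i := by
  simp only [kappaHalf, kappaShift, Fin.exists_fin_succ, Matrix.cons_val_zero, sub_zero,
    Matrix.cons_val_succ, Matrix.cons_val_fin_one, exists_const]
  omega

lemma eq_of_two_dvd_kappaHalf_sub_of_two_dvd_kappaShift_sub :
    ∀ i j : Fin 4, 2 ∣ kappaHalf i - kappaHalf j → 2 ∣ kappaShift i - kappaShift j → i = j := by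
  decide

/-- The fixed locus in `J = ℂ³/Λ` of the antireflection
`ρ₂ : (z₁,z₂,z₃) ↦ (-z₁,-z₂,z₃)` is the union of exactly `4` translates
`κᵢ + E` of the elliptic curve `E = (V₁ + Λ)/Λ`, `V₁ = ℂ·(0,0,1)`: the four
translates are pairwise disjoint and their union is the whole fixed locus. -/
theorem fixed_locus_of_antireflection_rho2 :
    (∀ z : Fin 3 → ℂ,
      (![-z 0, -z 1, z 2] - z ∈ LambdaZ) ↔
      (∃ i : Fin 4, ∃ w : ℂ, z - (kappas i + w • ![0,0,1]) ∈ LambdaZ)) ∧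
    (∀ i j : Fin 4, i ≠ j →
      ¬ ∃ w : ℂ, kappas i - kappas j - w • ![0,0,1] ∈ LambdaZ) := by
  refine ⟨fun z => ⟨fun hz => ?_, fun ⟨i, hi⟩ => ?_⟩, fun i j hij ⟨w, hw⟩ => ?_⟩
  · obtain ⟨m₀, m₁, n₀, n₁, e, hz₀, hz₁⟩ := rho2_sub_self_mem_LambdaZ_iff.1 hz
    obtain ⟨i, hi⟩ := exists_two_dvd_sub_kappaHalf_and_sub_kappaShift e (m₀ - n₀)
    exact ⟨i, (exists_sub_kappas_add_smul_mem_LambdaZ_iff hz₀ hz₁ i).2 hi⟩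
  · obtain ⟨p₀, p₁, q₀, q₁, h₀, h₁, -⟩ := exists_sub_add_smul_mem_LambdaZ_iff.1 hi
    simp only [kappas_eq, Matrix.cons_val] at h₀ h₁
    refine rho2_sub_self_mem_LambdaZ_iff.2 ⟨kappaShift i + p₀, p₁, q₀, q₁, kappaHalf i, ?_, ?_⟩
    · push_cast
      linear_combination h₀
    · linear_combination h₁
  · obtain ⟨hh, hs⟩ := (exists_sub_kappas_add_smul_mem_LambdaZ_iff (z := kappas i)
      (m₀ := kappaShift i) (m₁ := 0) (n₀ := 0) (n₁ := 0) (e := kappaHalf i)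
      (by simp [kappas_eq]) (by simp [kappas_eq]) j).1 ⟨w, by rwa [← sub_sub]⟩
    exact hij (eq_of_two_dvd_kappaHalf_sub_of_two_dvd_kappaShift_sub i j hh (by simpa using hs))

end
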